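/- If H is an r-uniform simple hypergraph with maximum degree Δ and at least one edge, then λ_{h+1,1}(H)/λ_{h,1}(H) tends to 1 as the integer h tends to infinity. -/

import Mathlib

open scoped Classical

/-- The "colour distance" between two vertices under a colouring `f`. -/
def hDist {V : Type*} (f : V → ℕ) (u v : V) : ℕ := ((f u : ℤ) - (f v : ℤ)).natAbs

/-- An `L(h,k)`-colouring of the hypergraph with edge family `E`. -/
def IsLColoring {V : Type*} (E : Finset (Finset V)) (h k : ℕ) (f : V → ℕ) : Prop :=
  (∀ u v : V, u ≠ v → (∃ e ∈ E, u ∈ e ∧ v ∈ e) → h ≤ hDist f u v) ∧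
  (∀ u v : V, u ≠ v →
    (∃ e₁ ∈ E, ∃ e₂ ∈ E, u ∈ e₁ ∧ v ∈ e₂ ∧ ((e₁ ∩ e₂) \ {u, v}).Nonempty) →
    k ≤ hDist f u v)

/-- The span of a colouring: maximum colour minus minimum colour. -/
noncomputable def hSpan {V : Type*} [Fintype V] (f : V → ℕ) : ℕ :=
  Finset.univ.sup f - sInf (Set.range f)

/-- The `L(h,k)`-chromatic number of a hypergraph. -/
noncomputable def lamL {V : Type*} [Fintype V] (E : Finset (Finset V)) (h k : ℕ) : ℕ :=
  sInf {s | ∃ f : V → ℕ, IsLColoring E h k f ∧ hSpan f = s}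

/-- A simple hypergraph: edges have cardinality at least 2, and no edge contains another. -/
def HSimple {V : Type*} (E : Finset (Finset V)) : Prop :=
  (∀ e ∈ E, 2 ≤ e.card) ∧ ∀ e₁ ∈ E, ∀ e₂ ∈ E, e₁ ⊆ e₂ → e₁ = e₂

/-- Degree of a vertex in a hypergraph. -/
noncomputable def hDeg {V : Type*} (E : Finset (Finset V)) (v : V) : ℕ :=
  (E.filter (fun e => v ∈ e)).card

/-- The 2-section of a hypergraph. -/
def twoSection {V : Type*} (E : Finset (Finset V)) : SimpleGraph V where
  Adj u v := u ≠ v ∧ ∃ e ∈ E, u ∈ e ∧ v ∈ e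
  symm := by
    constructor
    rintro u v ⟨huv, e, he, hu, hv⟩
    exact ⟨huv.symm, e, he, hv, hu⟩
  loopless := by
    constructor
    rintro u ⟨h, -⟩
    exact h rfl

/-! Every `L(h,1)`-colouring `f` is turned into an `L(h+1,1)`-colouring by adding to `f v` the
number of distinct colours below `f v`: colours that differ move apart by at least one, and the
span grows by at most `|V| - 1`. Hence `λ_{h,1} ≤ λ_{h+1,1} ≤ λ_{h,1} + |V| - 1`, while
`h ≤ λ_{h,1}` as soon as some edge has two vertices, so the ratio lies in
`[1, 1 + (|V| - 1)/h]`. -/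

open Filter Topology

section LColoring

variable {V : Type*} [Fintype V]

lemma hDist_le_hSpan (f : V → ℕ) (u v : V) : hDist f u v ≤ hSpan f := by
  have hu : f u ≤ Finset.univ.sup f := Finset.le_sup (Finset.mem_univ u)
  have hv : f v ≤ Finset.univ.sup f := Finset.le_sup (Finset.mem_univ v)
  have hu' : sInf (Set.range f) ≤ f u := Nat.sInf_le ⟨u, rfl⟩
  have hv' : sInf (Set.range f) ≤ f v := Nat.sInf_le ⟨v, rfl⟩
  unfold hDist hSpan
  omega

omit [Fintype V] in
lemma IsLColoring.mono {E : Finset (Finset V)} {h h' k k' : ℕ} {f : V → ℕ} (hh : h ≤ h')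
    (hk : k ≤ k') (hf : IsLColoring E h' k' f) : IsLColoring E h k f :=
  ⟨fun u v huv he => hh.trans (hf.1 u v huv he), fun u v huv he => hk.trans (hf.2 u v huv he)⟩

lemma exists_isLColoring (E : Finset (Finset V)) (h k : ℕ) :
    ∃ f : V → ℕ, IsLColoring E h k f := by
  let f : V → ℕ := fun v => (h + k) * (Fintype.equivFin V v : ℕ)
  have hf : ∀ u v, u ≠ v → h + k ≤ hDist f u v := by
    intro u v huv
    have hne : (Fintype.equivFin V u : ℕ) ≠ Fintype.equivFin V v :=
      fun hc => huv ((Fintype.equivFin V).injective (Fin.val_injective hc))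
    unfold hDist
    simp only [f, Nat.cast_mul, ← mul_sub, Int.natAbs_mul, Int.natAbs_natCast]
    exact Nat.le_mul_of_pos_right _ (by omega)
  exact ⟨f, fun u v huv _ => (hf u v huv).trans' (by omega),
    fun u v huv _ => (hf u v huv).trans' (by omega)⟩

lemma lamL_le_hSpan {E : Finset (Finset V)} {h k : ℕ} {f : V → ℕ}
    (hf : IsLColoring E h k f) : lamL E h k ≤ hSpan f :=
  Nat.sInf_le ⟨f, hf, rfl⟩

lemma exists_isLColoring_hSpan_eq_lamL (E : Finset (Finset V)) (h k : ℕ) :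
    ∃ f : V → ℕ, IsLColoring E h k f ∧ hSpan f = lamL E h k :=
  let ⟨f, hf⟩ := exists_isLColoring E h k
  Nat.sInf_mem (s := {s | ∃ f : V → ℕ, IsLColoring E h k f ∧ hSpan f = s})
    ⟨_, f, hf, rfl⟩

lemma le_lamL_of_mem {E : Finset (Finset V)} {e : Finset V} (he : e ∈ E) (he2 : 2 ≤ e.card)
    (h k : ℕ) : h ≤ lamL E h k := by
  obtain ⟨f, hf, hspan⟩ := exists_isLColoring_hSpan_eq_lamL E h k
  obtain ⟨u, hu, v, hv, huv⟩ := Finset.one_lt_card.mp he2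
  calc h ≤ hDist f u v := hf.1 u v huv ⟨e, he, hu, hv⟩
    _ ≤ hSpan f := hDist_le_hSpan f u v
    _ = lamL E h k := hspan

lemma lamL_mono_left (E : Finset (Finset V)) {h h' : ℕ} (hh : h ≤ h') (k : ℕ) :
    lamL E h k ≤ lamL E h' k := by
  obtain ⟨f, hf, hspan⟩ := exists_isLColoring_hSpan_eq_lamL E h' k
  exact hspan ▸ lamL_le_hSpan (hf.mono hh le_rfl)

end LColoring

section RankShift

open Finset

variable {V : Type*} [Fintype V]

def colourRank (f : V → ℕ) (v : V) : ℕ := #{x ∈ univ.image f | x < f v}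

def rankShift (f : V → ℕ) (v : V) : ℕ := f v + colourRank f v

lemma colourRank_lt_colourRank (f : V → ℕ) {u v : V} (huv : f u < f v) :
    colourRank f u < colourRank f v := by
  refine card_lt_card ⟨fun x hx => ?_, fun hsub => ?_⟩
  · simp only [mem_filter] at hx ⊢
    exact ⟨hx.1, hx.2.trans huv⟩
  · have hmem : f u ∈ {x ∈ univ.image f | x < f v} :=
      mem_filter.mpr ⟨mem_image_of_mem f (mem_univ u), huv⟩
    exact lt_irrefl _ (mem_filter.mp (hsub hmem)).2

lemma colourRank_le (f : V → ℕ) (v : V) : colourRank f v ≤ Fintype.card V - 1 := by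
  have hsub : {x ∈ univ.image f | x < f v} ⊆ (univ.image f).erase (f v) :=
    fun x hx => mem_erase.mpr ⟨(mem_filter.mp hx).2.ne, (mem_filter.mp hx).1⟩
  calc colourRank f v ≤ #((univ.image f).erase (f v)) := card_le_card hsub
    _ = #(univ.image f) - 1 := card_erase_of_mem (mem_image_of_mem f (mem_univ v))
    _ ≤ Fintype.card V - 1 := Nat.sub_le_sub_right card_image_le 1

lemma hDist_add_one_le_hDist_rankShift (f : V → ℕ) {u v : V} (hne : f u ≠ f v) :
    hDist f u v + 1 ≤ hDist (rankShift f) u v := by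
  unfold hDist rankShift
  rcases hne.lt_or_gt with hlt | hlt <;> have := colourRank_lt_colourRank f hlt <;> omega

lemma hDist_le_hDist_rankShift (f : V → ℕ) (u v : V) :
    hDist f u v ≤ hDist (rankShift f) u v := by
  by_cases hne : f u = f v
  · simp [hDist, hne]
  · exact (Nat.le_succ _).trans (hDist_add_one_le_hDist_rankShift f hne)

lemma hSpan_rankShift_le (f : V → ℕ) :
    hSpan (rankShift f) ≤ hSpan f + (Fintype.card V - 1) := by
  have hsup : univ.sup (rankShift f) ≤ univ.sup f + (Fintype.card V - 1) :=
    Finset.sup_le fun v _ => Nat.add_le_add (le_sup (mem_univ v)) (colourRank_le f v)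
  have hinf : sInf (Set.range f) ≤ sInf (Set.range (rankShift f)) := by
    rcases isEmpty_or_nonempty V with hV | hV
    · simp [Set.range_eq_empty]
    · refine le_csInf (Set.range_nonempty _) ?_
      rintro _ ⟨v, rfl⟩
      exact (Nat.sInf_le (Set.mem_range_self v)).trans (Nat.le_add_right _ _)
  unfold hSpan
  omega

lemma IsLColoring.rankShift {E : Finset (Finset V)} {h k : ℕ} {f : V → ℕ} (hh : h ≠ 0)
    (hf : IsLColoring E h k f) : IsLColoring E (h + 1) k (rankShift f) := by
  refine ⟨fun u v huv he => ?_, fun u v huv he => (hf.2 u v huv he).trans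
    (hDist_le_hDist_rankShift f u v)⟩
  have hdist := hf.1 u v huv he
  have hne : f u ≠ f v := fun hc => hh (by simpa [hDist, hc] using hdist)
  exact (Nat.add_le_add_right hdist 1).trans (hDist_add_one_le_hDist_rankShift f hne)

lemma lamL_succ_le (E : Finset (Finset V)) {h : ℕ} (hh : h ≠ 0) (k : ℕ) :
    lamL E (h + 1) k ≤ lamL E h k + (Fintype.card V - 1) := by
  obtain ⟨f, hf, hspan⟩ := exists_isLColoring_hSpan_eq_lamL E h k
  exact hspan ▸ (lamL_le_hSpan (hf.rankShift hh)).trans (hSpan_rankShift_le f)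

end RankShift

lemma tendsto_succ_div_self_of_le_add {a : ℕ → ℕ} (c : ℕ) (hle : ∀ n, n ≤ a n)
    (hmono : ∀ n, a n ≤ a (n + 1)) (hstep : ∀ n, n ≠ 0 → a (n + 1) ≤ a n + c) :
    Tendsto (fun n => (a (n + 1) : ℝ) / a n) atTop (𝓝 1) := by
  have hupper : Tendsto (fun n : ℕ => 1 + (c : ℝ) / n) atTop (𝓝 1) := by
    simpa using tendsto_const_nhds.add (tendsto_const_div_atTop_nhds_zero_nat (c : ℝ))
  have ha_pos : ∀ n, n ≠ 0 → (0 : ℝ) < a n := fun n hn => by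
    exact_mod_cast (Nat.pos_of_ne_zero hn).trans_le (hle n)
  refine tendsto_of_tendsto_of_tendsto_of_le_of_le' tendsto_const_nhds hupper ?_ ?_
  · filter_upwards [eventually_ne_atTop 0] with n hn
    exact (one_le_div (ha_pos n hn)).mpr (by exact_mod_cast hmono n)
  · filter_upwards [eventually_ne_atTop 0] with n hn
    have ha_pos := ha_pos n hn
    calc (a (n + 1) : ℝ) / a n ≤ (a n + c) / a n := by
          gcongr
          exact_mod_cast hstep n hn
      _ = 1 + c / a n := by rw [add_div, div_self ha_pos.ne']
      _ ≤ 1 + c / n := by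
          gcongr
          exact_mod_cast hle n

theorem tendsto_lamL_ratio_general {V : Type*} [Fintype V] (E : Finset (Finset V))
    (hsimple : HSimple E)
    (hE : E.Nonempty) :
    Filter.Tendsto (fun h : ℕ => (lamL E (h + 1) 1 : ℝ) / (lamL E h 1 : ℝ))
      Filter.atTop (nhds 1) := by
  obtain ⟨e, he⟩ := hE
  exact tendsto_succ_div_self_of_le_add (a := (lamL E · 1)) (Fintype.card V - 1)
    (le_lamL_of_mem he (hsimple.1 e he) · 1)
    (fun h => lamL_mono_left E h.le_succ 1) (fun _ hh => lamL_succ_le E hh 1)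

/-- If `H` is an `r`-uniform simple hypergraph with maximum degree `Δ` and
at least one edge, then `λ_{h+1,1}(H) / λ_{h,1}(H) → 1` as `h → ∞`. -/
theorem tendsto_lamL_ratio {V : Type*} [Fintype V] (E : Finset (Finset V))
    (r Δ : ℕ)
    (hsimple : HSimple E)
    (hunif : ∀ e ∈ E, e.card = r)
    (hΔ : Finset.univ.sup (fun v : V => hDeg E v) = Δ)
    (hE : E.Nonempty) :
    Filter.Tendsto (fun h : ℕ => (lamL E (h + 1) 1 : ℝ) / (lamL E h 1 : ℝ))
      Filter.atTop (nhds 1) :=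
  tendsto_lamL_ratio_general E hsimple hE
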